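/- arXiv:1701.01560 — 2 statements merged into one kernel-verified Lean document; each statement's English description precedes it below -/
import Mathlib

section
/- For every y ∈ ℝ, the function G is differentiable at y with G′(y) = φ(y)·(Φ(x) − Φ((x − ρy)/√(1−ρ²))). In particular, G′(y*) = 0. -/
open MeasureTheory Real

/-- The standard normal density `φ(u) = (2π)^{-1/2} exp(-u²/2)`. -/
noncomputable def stdNormalPDF (u : ℝ) : ℝ := (Real.sqrt (2 * π))⁻¹ * Real.exp (-u ^ 2 / 2)

/-- The standard normal CDF `Φ(x) = ∫_{-∞}^x φ(u) du`. -/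
noncomputable def stdNormalCDF (x : ℝ) : ℝ := ∫ u in Set.Iic x, stdNormalPDF u

/-- `G(y) = Φ(x)Φ(y) − ∫_{−∞}^{y} Φ((x − ρu)/√(1−ρ²)) φ(u) du`. -/
noncomputable def Gfun (ρ x y : ℝ) : ℝ :=
  stdNormalCDF x * stdNormalCDF y
    - ∫ u in Set.Iic y, stdNormalCDF ((x - ρ * u) / Real.sqrt (1 - ρ ^ 2)) * stdNormalPDF u

/-- `y* = x(1 − √(1−ρ²))/ρ`. -/
noncomputable def ystar (ρ x : ℝ) : ℝ := x * (1 - Real.sqrt (1 - ρ ^ 2)) / ρ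

/-!
Both terms of `G` are integrals over `(-∞, y]` of continuous integrable functions (the second
integrand is dominated by `φ` since `0 ≤ Φ ≤ 1`), so the fundamental theorem of calculus gives
`G'(y) = Φ(x)φ(y) - Φ((x - ρy)/√(1-ρ²))φ(y)`. The point `y*` solves `(x - ρy)/√(1-ρ²) = x`.
-/

theorem hasDerivAt_integral_Iic {E : Type*} [NormedAddCommGroup E] [NormedSpace ℝ E]
    [CompleteSpace E] {f : ℝ → E} {y : ℝ} (hf : Integrable f) (hfy : ContinuousAt f y) :
    HasDerivAt (fun t ↦ ∫ u in Set.Iic t, f u) (f y) y := by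
  have split : (fun t ↦ ∫ u in Set.Iic t, f u)
      = fun t ↦ (∫ u in Set.Iic 0, f u) + ∫ u in (0 : ℝ)..t, f u := by
    funext t
    rw [← intervalIntegral.integral_Iic_sub_Iic hf.integrableOn hf.integrableOn,
      add_sub_cancel]
  rw [split]
  exact (intervalIntegral.integral_hasDerivAt_right hf.intervalIntegrable
    hf.aestronglyMeasurable.stronglyMeasurableAtFilter hfy).const_add _

theorem stdNormalPDF_eq_gaussianPDFReal : stdNormalPDF = ProbabilityTheory.gaussianPDFReal 0 1 := by
  funext u
  simp [stdNormalPDF, ProbabilityTheory.gaussianPDFReal]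

theorem continuous_stdNormalPDF : Continuous stdNormalPDF := by
  unfold stdNormalPDF
  fun_prop

theorem integrable_stdNormalPDF : Integrable stdNormalPDF :=
  stdNormalPDF_eq_gaussianPDFReal ▸ ProbabilityTheory.integrable_gaussianPDFReal 0 1

theorem integral_stdNormalPDF : ∫ u, stdNormalPDF u = 1 :=
  stdNormalPDF_eq_gaussianPDFReal ▸ ProbabilityTheory.integral_gaussianPDFReal_eq_one 0 one_ne_zero

theorem stdNormalPDF_nonneg (u : ℝ) : 0 ≤ stdNormalPDF u := by
  unfold stdNormalPDF
  positivity

theorem hasDerivAt_stdNormalCDF (y : ℝ) : HasDerivAt stdNormalCDF (stdNormalPDF y) y :=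
  hasDerivAt_integral_Iic integrable_stdNormalPDF continuous_stdNormalPDF.continuousAt

theorem continuous_stdNormalCDF : Continuous stdNormalCDF :=
  continuous_iff_continuousAt.2 fun y ↦ (hasDerivAt_stdNormalCDF y).continuousAt

theorem abs_stdNormalCDF_le_one (t : ℝ) : |stdNormalCDF t| ≤ 1 := by
  rw [stdNormalCDF, abs_of_nonneg (setIntegral_nonneg measurableSet_Iic fun u _ ↦ stdNormalPDF_nonneg u),
    ← integral_stdNormalPDF]
  exact setIntegral_le_integral integrable_stdNormalPDF (.of_forall stdNormalPDF_nonneg)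

theorem hasDerivAt_integral_Iic_mul_stdNormalPDF {h : ℝ → ℝ} {C : ℝ} (hc : Continuous h)
    (hC : ∀ u, |h u| ≤ C) (y : ℝ) :
    HasDerivAt (fun t ↦ ∫ u in Set.Iic t, h u * stdNormalPDF u) (h y * stdNormalPDF y) y :=
  hasDerivAt_integral_Iic
    (integrable_stdNormalPDF.bdd_mul hc.aestronglyMeasurable (.of_forall hC))
    (hc.mul continuous_stdNormalPDF).continuousAt

theorem hasDerivAt_Gfun (ρ x y : ℝ) :
    HasDerivAt (Gfun ρ x)
      (stdNormalPDF y * (stdNormalCDF x - stdNormalCDF ((x - ρ * y) / √(1 - ρ ^ 2)))) y := by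
  have hΦ : Continuous fun u ↦ stdNormalCDF ((x - ρ * u) / √(1 - ρ ^ 2)) :=
    continuous_stdNormalCDF.comp (by fun_prop)
  exact (((hasDerivAt_stdNormalCDF y).const_mul (stdNormalCDF x)).sub
    (hasDerivAt_integral_Iic_mul_stdNormalPDF hΦ (fun _ ↦ abs_stdNormalCDF_le_one _) y)).congr_deriv
    (by ring)

theorem sub_mul_ystar_div_sqrt (x : ℝ) {ρ : ℝ} (hρ : ρ ∈ Set.Ioo (-1 : ℝ) 1) :
    (x - ρ * ystar ρ x) / √(1 - ρ ^ 2) = x := by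
  have hs : 0 < √(1 - ρ ^ 2) := Real.sqrt_pos.2 (by nlinarith [hρ.1, hρ.2])
  rcases eq_or_ne ρ 0 with rfl | hρ0
  · simp
  · rw [ystar]
    field_simp
    ring

theorem stmt3_general (ρ x : ℝ) (hρ : ρ ∈ Set.Ioo (-1 : ℝ) 1) :
    (∀ y : ℝ, HasDerivAt (Gfun ρ x)
        (stdNormalPDF y * (stdNormalCDF x - stdNormalCDF ((x - ρ * y) / Real.sqrt (1 - ρ ^ 2)))) y)
    ∧ HasDerivAt (Gfun ρ x) 0 (ystar ρ x) := by
  refine ⟨hasDerivAt_Gfun ρ x, ?_⟩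
  simpa [sub_mul_ystar_div_sqrt x hρ] using hasDerivAt_Gfun ρ x (ystar ρ x)

/-- For `ρ ∈ (−1,1)`, `ρ ≠ 0`, `x ∈ ℝ`: for every `y`, `G` is
differentiable at `y` with `G′(y) = φ(y)·(Φ(x) − Φ((x − ρy)/√(1−ρ²)))`; in particular
`G′(y*) = 0`. -/
theorem stmt3 (ρ x : ℝ) (hρ : ρ ∈ Set.Ioo (-1 : ℝ) 1) (hρ0 : ρ ≠ 0) :
    (∀ y : ℝ, HasDerivAt (Gfun ρ x)
        (stdNormalPDF y * (stdNormalCDF x - stdNormalCDF ((x - ρ * y) / Real.sqrt (1 - ρ ^ 2)))) y)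
    ∧ HasDerivAt (Gfun ρ x) 0 (ystar ρ x) :=
  stmt3_general ρ x hρ
end

section
/- For every ρ ∈ (−1,1) with ρ ≠ 0 and every x ∈ ℝ, (1−ρ²)^{−3/2} ∫_{−∞}^{y*} (ρx − u) φ((x − ρu)/√(1−ρ²)) φ(u) du = (1/(2π)) (1−ρ²)^{−1/2} exp(−x² h(ρ)), where y* = x(1 − √(1−ρ²))/ρ and h(ρ) = (1 − √(1−ρ²))/ρ². -/
open MeasureTheory Real

/-- `h(ρ) = (1 − √(1−ρ²))/ρ²`. -/
noncomputable def hfun (ρ : ℝ) : ℝ := (1 - Real.sqrt (1 - ρ ^ 2)) / ρ ^ 2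

/-!
Completing the square in `u` gives
`φ((x - ρu)/√(1-ρ²)) φ(u) = (2π)⁻¹ e^{-x²/2} e^{-(u-ρx)²/(2(1-ρ²))}`,
so the integrand is the exact derivative of `(1-ρ²)(2π)⁻¹ e^{-x²/2} e^{-(u-ρx)²/(2(1-ρ²))}`,
which vanishes at `-∞`. Evaluating at `y*` and using `(1 - √(1-ρ²))² = 2(1 - √(1-ρ²)) - ρ²`,
the exponent collapses to `-x² h(ρ)`.
-/

open Filter Set

theorem tendsto_exp_neg_sub_sq_div_atBot {c : ℝ} (hc : 0 < c) (a : ℝ) :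
    Tendsto (fun u => exp (-(u - a) ^ 2 / (2 * c))) atBot (nhds 0) := by
  have hsub : Tendsto (fun u => a - u) atBot atTop :=
    tendsto_atTop_add_const_left _ _ tendsto_neg_atBot_atTop
  have hsq : Tendsto (fun u => (u - a) ^ 2 / (2 * c)) atBot atTop := by
    refine ((tendsto_pow_atTop two_ne_zero).comp hsub).atTop_div_const (by positivity : 0 < 2 * c)
      |>.congr fun u => ?_
    simp only [Function.comp_apply]; ring
  refine (tendsto_exp_atBot.comp (tendsto_neg_atTop_atBot.comp hsq)).congr fun u => ?_
  simp only [Function.comp_apply, neg_div]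

theorem hasDerivAt_mul_exp_neg_sub_sq_div {c : ℝ} (hc : c ≠ 0) (a u : ℝ) :
    HasDerivAt (fun u => c * exp (-(u - a) ^ 2 / (2 * c)))
      ((a - u) * exp (-(u - a) ^ 2 / (2 * c))) u := by
  have h := (((((hasDerivAt_id u).sub_const a).pow 2).neg.div_const (2 * c)).exp).const_mul c
  refine h.congr_deriv ?_
  simp only [Pi.pow_apply, Pi.neg_apply, id]
  field_simp
  ring

theorem integral_Iic_sub_mul_exp_neg_sub_sq_div {c : ℝ} (hc : 0 < c) (a y : ℝ) :
    ∫ u in Iic y, (a - u) * exp (-(u - a) ^ 2 / (2 * c)) = c * exp (-(y - a) ^ 2 / (2 * c)) := by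
  have hint : Integrable fun u => (a - u) * exp (-(u - a) ^ 2 / (2 * c)) := by
    have := ((integrable_mul_exp_neg_mul_sq (inv_pos.2 (mul_pos two_pos hc))).comp_sub_right a).neg
    refine this.congr (.of_forall fun u => ?_)
    simp only [Pi.neg_apply]
    rw [show -(u - a) ^ 2 / (2 * c) = -(2 * c)⁻¹ * (u - a) ^ 2 by ring]
    ring
  have hlim := (tendsto_exp_neg_sub_sq_div_atBot hc a).const_mul c
  rw [mul_zero] at hlim
  rw [integral_Iic_of_hasDerivAt_of_tendsto'
    (fun u _ => hasDerivAt_mul_exp_neg_sub_sq_div hc.ne' a u) hint.integrableOn hlim, sub_zero]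

theorem stdNormalPDF_mul_stdNormalPDF {ρ : ℝ} (hρ : ρ ^ 2 < 1) (x u : ℝ) :
    stdNormalPDF ((x - ρ * u) / √(1 - ρ ^ 2)) * stdNormalPDF u
      = (2 * π)⁻¹ * exp (-x ^ 2 / 2) * exp (-(u - ρ * x) ^ 2 / (2 * (1 - ρ ^ 2))) := by
  have hpos : 0 < 1 - ρ ^ 2 := by linarith
  have hsqrt : (√(2 * π))⁻¹ * (√(2 * π))⁻¹ = (2 * π)⁻¹ := by
    rw [← mul_inv, mul_self_sqrt (by positivity)]
  have hexp : -((x - ρ * u) / √(1 - ρ ^ 2)) ^ 2 / 2 + -u ^ 2 / 2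
      = -x ^ 2 / 2 + -(u - ρ * x) ^ 2 / (2 * (1 - ρ ^ 2)) := by
    rw [div_pow, sq_sqrt hpos.le]
    field_simp
    ring
  unfold stdNormalPDF
  rw [mul_mul_mul_comm, hsqrt, ← exp_add, hexp, exp_add, mul_assoc]

theorem neg_sq_div_two_add_neg_sq_ystar_sub_div_eq {ρ : ℝ} (hρ : ρ ^ 2 < 1) (hρ0 : ρ ≠ 0)
    (x : ℝ) : -x ^ 2 / 2 + -(ystar ρ x - ρ * x) ^ 2 / (2 * (1 - ρ ^ 2)) = -x ^ 2 * hfun ρ := by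
  have hpos : 0 < 1 - ρ ^ 2 := by linarith
  rw [ystar, hfun]
  field_simp
  linear_combination (-x ^ 2) * sq_sqrt hpos.le

/-- For every `ρ ∈ (−1,1)` with `ρ ≠ 0` and every `x ∈ ℝ`,
`(1−ρ²)^{−3/2} ∫_{−∞}^{y*} (ρx − u) φ((x − ρu)/√(1−ρ²)) φ(u) du
  = (2π)⁻¹ (1−ρ²)^{−1/2} exp(−x² h(ρ))`. -/
theorem stmt11 (ρ x : ℝ) (hρ : ρ ∈ Set.Ioo (-1 : ℝ) 1) (hρ0 : ρ ≠ 0) :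
    (1 - ρ ^ 2) ^ (-(3 : ℝ) / 2) *
        ∫ u in Set.Iic (ystar ρ x),
          (ρ * x - u) * stdNormalPDF ((x - ρ * u) / Real.sqrt (1 - ρ ^ 2)) * stdNormalPDF u
      = (2 * π)⁻¹ * (1 - ρ ^ 2) ^ (-(1 : ℝ) / 2) * Real.exp (-x ^ 2 * hfun ρ) := by
  have hρ2 : ρ ^ 2 < 1 := by rw [sq_lt_one_iff_abs_lt_one, abs_lt]; exact hρ
  have hpos : 0 < 1 - ρ ^ 2 := by linarith
  simp_rw [mul_assoc, stdNormalPDF_mul_stdNormalPDF hρ2, mul_left_comm (ρ * x - _),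
    integral_const_mul, integral_Iic_sub_mul_exp_neg_sub_sq_div hpos]
  have hrpow : (1 - ρ ^ 2) ^ (-(3 : ℝ) / 2) * (1 - ρ ^ 2) = (1 - ρ ^ 2) ^ (-(1 : ℝ) / 2) := by
    rw [← rpow_add_one hpos.ne']; norm_num
  rw [← hrpow, ← neg_sq_div_two_add_neg_sq_ystar_sub_div_eq hρ2 hρ0, exp_add]
  ring
end
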